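/- Let G(ξ) = (1/4π)e^{−|ξ|²/4}, v^G(ξ) = (1/2π) ξ^⊥/|ξ|² (1 − e^{−|ξ|²/4}), and for sufficiently regular w̃ with G^{−1/2} w̃ ∈ L², define Λw̃ = v^G·∇w̃ + (K_{BS} ⋆ w̃)·∇G. Then ∫_{ℝ²} G^{−1} w̃ (Λ w̃) = 0; in other words Λ is skew-symmetric on the weighted space L²_w(ℝ²) with inner product ⟨f,g⟩ = ∫ G^{−1} f g. -/

import Mathlib

/-!
The Oseen part of `G⁻¹ w̃ Λw̃` equals `a(|ξ|) ∂_θ (w̃²)` for a radial weight `a`, so in polar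
coordinates it integrates to zero over every circle.
The Biot–Savart part is `-(1/2) ∫ w̃ ṽ·ξ = -(1/4π) ∬ w̃(ξ) w̃(η) K(ξ-η)·ξ` with
`K(z) = z^⊥/|z|²`; since `K(z) ⊥ z` we have `K(ξ-η)·ξ = K(ξ-η)·η`, and as `K` is odd the integrand
is antisymmetric under `ξ ↔ η`. Fubini applies because `|w̃| ⋆ |·|⁻¹` is bounded.
When the whole integrand is not integrable, its Bochner integral is `0` by convention.
-/

open Real MeasureTheory
open scoped ENNReal RealInnerProductSpace

noncomputable section

abbrev E2 := EuclideanSpace ℝ (Fin 2)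

def perp (x : E2) : E2 := (EuclideanSpace.equiv (Fin 2) ℝ).symm ![-(x 1), x 0]

/-- The Gaussian `G(ξ) = (1/4π) e^{−|ξ|²/4}`. -/
def Gg (ξ : E2) : ℝ := (1 / (4 * π)) * Real.exp (-‖ξ‖ ^ 2 / 4)

/-- The Oseen velocity profile `v^G(ξ) = (1/2π) ξ^⊥/|ξ|² (1 − e^{−|ξ|²/4})`. -/
def vG (ξ : E2) : E2 :=
  ((2 * π * ‖ξ‖ ^ 2)⁻¹ * (1 - Real.exp (-‖ξ‖ ^ 2 / 4))) • perp ξ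

open Set

theorem perp_neg (x : E2) : perp (-x) = -perp x := by
  ext i; fin_cases i <;> simp [perp]

theorem inner_perp_self (x : E2) : ⟪perp x, x⟫ = 0 := by
  simp [perp, PiLp.inner_apply, Fin.sum_univ_two]; ring

theorem norm_perp (x : E2) : ‖perp x‖ = ‖x‖ := by
  simp [EuclideanSpace.norm_eq, perp, Fin.sum_univ_two, add_comm]

theorem continuous_perp : Continuous perp := by
  unfold perp; fun_prop

theorem hasDerivAt_circle (r θ : ℝ) :
    HasDerivAt (fun θ => !₂[r * cos θ, r * sin θ]) (perp !₂[r * cos θ, r * sin θ]) θ := by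
  have h : HasDerivAt (fun θ => ![r * cos θ, r * sin θ]) ![-(r * sin θ), r * cos θ] θ := by
    rw [hasDerivAt_pi]
    intro i
    fin_cases i
    · simpa using (hasDerivAt_cos θ).const_mul r
    · simpa using (hasDerivAt_sin θ).const_mul r
  exact (EuclideanSpace.equiv (Fin 2) ℝ).symm.hasFDerivAt.comp_hasDerivAt θ h

theorem Gg_pos (ξ : E2) : 0 < Gg ξ := by
  unfold Gg; positivity

theorem hasGradientAt_Gg (ξ : E2) : HasGradientAt Gg (-(Gg ξ / 2) • ξ) ξ := by
  rw [hasGradientAt_iff_hasFDerivAt]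
  have h := (((hasFDerivAt_id ξ).norm_sq.const_mul (-1 / 4)).exp).const_mul (1 / (4 * π))
  refine h.congr_of_eventuallyEq (.of_forall fun x => ?_) |>.congr_fderiv ?_
  · simp only [Gg, id]; ring_nf
  · ext u
    simp only [one_div, mul_inv_rev, id_eq, ContinuousLinearMap.comp_id, smul_apply,
      coe_innerSL_apply, nsmul_eq_mul, Nat.cast_ofNat, smul_eq_mul, Gg, neg_smul, map_neg,
      map_smul, neg_apply, InnerProductSpace.toDual_apply_apply]
    ring_nf

theorem integrableOn_polarCoord_target {F : Type*} [NormedAddCommGroup F] [NormedSpace ℝ F]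
    {g : ℝ × ℝ → F} (hg : Integrable g) :
    IntegrableOn (fun p => p.1 • g (polarCoord.symm p)) polarCoord.target := by
  have hmeas := polarCoord.open_target.measurableSet
  have key := (integrableOn_image_iff_integrableOn_abs_det_fderiv_smul volume hmeas
    (fun p _ => (hasFDerivAt_polarCoord_symm p).hasFDerivWithinAt) polarCoord.symm.injOn g).1
    (by rw [polarCoord.symm_image_target_eq_source]; exact hg.integrableOn)
  refine key.congr_fun (fun p hp => ?_) hmeas
  dsimp only
  rw [det_fderivPolarCoordSymm, abs_of_pos (by rw [polarCoord_target] at hp; exact hp.1)]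

def measurableEquivRealProd : E2 ≃ᵐ ℝ × ℝ :=
  (MeasurableEquiv.toLp 2 (Fin 2 → ℝ)).symm.trans MeasurableEquiv.finTwoArrow

theorem volume_preserving_measurableEquivRealProd_symm :
    MeasurePreserving measurableEquivRealProd.symm :=
  ((volume_preserving_finTwoArrow ℝ).comp
    (EuclideanSpace.volume_preserving_symm_measurableEquiv_toLp (Fin 2))).symm _

theorem measurableEquivRealProd_symm_apply (p : ℝ × ℝ) :
    measurableEquivRealProd.symm p = !₂[p.1, p.2] := by
  ext i; fin_cases i <;> rfl

theorem integral_eq_integral_polar {F : Type*} [NormedAddCommGroup F] [NormedSpace ℝ F]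
    {f : E2 → F} (hf : Integrable f) :
    ∫ ξ, f ξ = ∫ r in Ioi 0, ∫ θ in Ioo (-π) π, r • f !₂[r * cos θ, r * sin θ] := by
  have he := volume_preserving_measurableEquivRealProd_symm
  have hg : Integrable (f ∘ measurableEquivRealProd.symm) :=
    (he.integrable_comp_emb measurableEquivRealProd.symm.measurableEmbedding).2 hf
  have hpolar := integrableOn_polarCoord_target hg
  rw [polarCoord_target, IntegrableOn, Measure.volume_eq_prod, ← Measure.prod_restrict] at hpolar
  rw [← he.integral_comp measurableEquivRealProd.symm.measurableEmbedding,
    ← integral_comp_polarCoord_symm,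
    polarCoord_target, Measure.volume_eq_prod, ← Measure.prod_restrict]
  exact (integral_prod _ hpolar).trans (by simp [measurableEquivRealProd_symm_apply])

theorem integral_radial_mul_fderiv_perp_eq_zero {a : ℝ → ℝ} {f : E2 → ℝ} (hf : ContDiff ℝ 1 f)
    (hint : Integrable fun ξ => a ‖ξ‖ * fderiv ℝ f ξ (perp ξ)) :
    ∫ ξ, a ‖ξ‖ * fderiv ℝ f ξ (perp ξ) = 0 := by
  rw [integral_eq_integral_polar hint]
  refine setIntegral_eq_zero_of_forall_eq_zero fun r (hr : 0 < r) => ?_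
  set γ : ℝ → E2 := fun θ => !₂[r * cos θ, r * sin θ]
  have hnorm (θ : ℝ) : ‖γ θ‖ = r := by
    simp [γ, EuclideanSpace.norm_eq, Fin.sum_univ_two, mul_pow, ← mul_add, hr.le]
  have hderiv (θ : ℝ) : HasDerivAt (f ∘ γ) (fderiv ℝ f (γ θ) (perp (γ θ))) θ :=
    (hf.differentiable one_ne_zero (γ θ)).hasFDerivAt.comp_hasDerivAt θ (hasDerivAt_circle r θ)
  have hγ : Continuous γ := by fun_prop
  have hcont : Continuous fun θ => fderiv ℝ f (γ θ) (perp (γ θ)) :=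
    ((hf.continuous_fderiv one_ne_zero).comp hγ).clm_apply (continuous_perp.comp hγ)
  have hperiod : γ π = γ (-π) := by simp [γ]
  calc ∫ θ in Ioo (-π) π, r • (a ‖γ θ‖ * fderiv ℝ f (γ θ) (perp (γ θ)))
      = r * a r * ∫ θ in -π..π, fderiv ℝ f (γ θ) (perp (γ θ)) := by
        simp_rw [hnorm, smul_eq_mul, ← mul_assoc]
        rw [integral_const_mul, intervalIntegral.integral_of_le (by linarith [pi_pos]),
          integral_Ioc_eq_integral_Ioo]
    _ = 0 := by
        rw [intervalIntegral.integral_eq_sub_of_hasDerivAt (fun θ _ => hderiv θ)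
          (hcont.intervalIntegrable _ _)]
        simp [hperiod]

def oseenWeight (s : ℝ) : ℝ :=
  (1 / (4 * π) * exp (-s ^ 2 / 4))⁻¹ * ((2 * π * s ^ 2)⁻¹ * (1 - exp (-s ^ 2 / 4))) / 2

theorem Gg_inv_mul_inner_vG_gradient {f : E2 → ℝ} (hf : Differentiable ℝ f) (ξ : E2) :
    (Gg ξ)⁻¹ * f ξ * ⟪vG ξ, gradient f ξ⟫ = oseenWeight ‖ξ‖ * fderiv ℝ (f * f) ξ (perp ξ) := by
  rw [fderiv_mul (hf ξ) (hf ξ), vG, real_inner_smul_left, inner_gradient_right, Gg, oseenWeight]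
  simp only [conj_trivial, _root_.add_apply, smul_apply, smul_eq_mul]
  ring

section RieszPotential

variable {E : Type*} [NormedAddCommGroup E] [NormedSpace ℝ E] [FiniteDimensional ℝ E]
  [MeasurableSpace E] [BorelSpace E] {μ : Measure E} [μ.IsAddHaarMeasure]

theorem integrable_indicator_ball_inv_norm (hd : 2 ≤ Module.finrank ℝ E) :
    Integrable ((Metric.ball (0 : E) 1).indicator fun z => ‖z‖⁻¹) μ := by
  refine (integrable_indicator_iff measurableSet_ball).2 <|
    integrableOn_ball_of_norm_le_rpow (C := 1) (α := 1) (by omega) (by exact_mod_cast hd)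
      (.of_forall fun z => ?_) (by fun_prop)
  simp [Real.rpow_neg_one]

theorem exists_forall_integral_abs_mul_inv_norm_sub_le (hd : 2 ≤ Module.finrank ℝ E)
    {f : E → ℝ} (hf : Integrable f μ) {M : ℝ} (hM : ∀ x, |f x| ≤ M) :
    ∃ C, ∀ ξ, Integrable (fun η => |f η| * ‖ξ - η‖⁻¹) μ ∧ ∫ η, |f η| * ‖ξ - η‖⁻¹ ∂μ ≤ C := by
  -- `‖z‖⁻¹ ≤ k z + 1` with `k` integrable
  set k : E → ℝ := (Metric.ball (0 : E) 1).indicator fun z => ‖z‖⁻¹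
  have hk : Integrable k μ := integrable_indicator_ball_inv_norm hd
  refine ⟨M * ∫ z, k z ∂μ + ∫ η, |f η| ∂μ, fun ξ => ?_⟩
  have hdom : Integrable (fun η => M * k (η - ξ) + |f η|) μ :=
    ((hk.comp_sub_right ξ).const_mul M).add hf.abs
  have hle (η : E) : |f η| * ‖ξ - η‖⁻¹ ≤ M * k (η - ξ) + |f η| := by
    rw [← norm_neg (ξ - η), neg_sub]
    by_cases hη : η - ξ ∈ Metric.ball 0 1
    · rw [show k (η - ξ) = ‖η - ξ‖⁻¹ from Set.indicator_of_mem hη _]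
      nlinarith [mul_le_mul_of_nonneg_right (hM η) (inv_nonneg.2 (norm_nonneg (η - ξ))),
        abs_nonneg (f η)]
    · rw [show k (η - ξ) = 0 from Set.indicator_of_notMem hη _, mul_zero, zero_add]
      rw [Metric.mem_ball, dist_zero_right, not_lt] at hη
      exact mul_le_of_le_one_right (abs_nonneg _) (inv_le_one_of_one_le₀ hη)
  have hint : Integrable (fun η => |f η| * ‖ξ - η‖⁻¹) μ :=
    hdom.mono' (hf.abs.aestronglyMeasurable.mul (by fun_prop))
      (.of_forall fun η => by rw [Real.norm_eq_abs, abs_of_nonneg (by positivity)]; exact hle η)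
  refine ⟨hint, (integral_mono hint hdom hle).trans_eq ?_⟩
  rw [integral_add ((hk.comp_sub_right ξ).const_mul M) hf.abs, integral_const_mul,
    integral_sub_right_eq_self k ξ]

end RieszPotential

theorem integrable_prod_of_integral_norm_le {α β F : Type*} [MeasurableSpace α]
    [MeasurableSpace β] [NormedAddCommGroup F] {μ : Measure α} {ν : Measure β} [SFinite ν]
    [SFinite μ] {f : α × β → F} (hf : AEStronglyMeasurable f (μ.prod ν))
    (hsec : ∀ᵐ x ∂μ, Integrable (fun y => f (x, y)) ν) {g : α → ℝ} (hg : Integrable g μ)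
    (hle : ∀ᵐ x ∂μ, ∫ y, ‖f (x, y)‖ ∂ν ≤ g x) :
    Integrable f (μ.prod ν) :=
  (integrable_prod_iff hf).2 ⟨hsec, hg.mono' hf.norm.integral_prod_right' <| hle.mono
    fun x hx => by rwa [Real.norm_eq_abs, abs_of_nonneg (integral_nonneg fun _ => norm_nonneg _)]⟩

theorem integral_eq_zero_of_comp_swap_eq_neg {α : Type*} [MeasurableSpace α] {μ : Measure α}
    [SFinite μ] {f : α × α → ℝ} (hf : ∀ z, f z.swap = -f z) : ∫ z, f z ∂μ.prod μ = 0 := by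
  have h := integral_prod_swap (μ := μ) (ν := μ) f
  simp_rw [hf, integral_neg] at h
  linarith

def biotSavartIntegrand (w : E2 → ℝ) (ξ η : E2) : E2 := (w η / ‖ξ - η‖ ^ 2) • perp (ξ - η)

def biotSavartPairing (w : E2 → ℝ) (p : E2 × E2) : ℝ :=
  w p.1 * ⟪biotSavartIntegrand w p.1 p.2, p.1⟫

theorem norm_biotSavartIntegrand (w : E2 → ℝ) (ξ η : E2) :
    ‖biotSavartIntegrand w ξ η‖ = |w η| * ‖ξ - η‖⁻¹ := by
  rw [biotSavartIntegrand, norm_smul, norm_perp, norm_div, norm_pow, Real.norm_eq_abs, norm_norm]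
  rcases eq_or_ne ‖ξ - η‖ 0 with h | h
  · simp [h]
  · field_simp

theorem biotSavartPairing_swap (w : E2 → ℝ) (p : E2 × E2) :
    biotSavartPairing w p.swap = -biotSavartPairing w p := by
  obtain ⟨ξ, η⟩ := p
  have hperp : ⟪perp (ξ - η), η⟫ = ⟪perp (ξ - η), ξ⟫ := by
    have := inner_perp_self (ξ - η)
    rw [inner_sub_right] at this
    linarith
  simp only [biotSavartPairing, biotSavartIntegrand, Prod.swap, real_inner_smul_left,
    ← neg_sub ξ η, norm_neg, perp_neg, inner_neg_left, hperp]
  ring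

theorem abs_biotSavartPairing_le (w : E2 → ℝ) (ξ η : E2) :
    |biotSavartPairing w (ξ, η)| ≤ ‖ξ‖ * |w ξ| * (|w η| * ‖ξ - η‖⁻¹) := by
  rw [biotSavartPairing, abs_mul, ← norm_biotSavartIntegrand]
  calc |w ξ| * |⟪biotSavartIntegrand w ξ η, ξ⟫|
      ≤ |w ξ| * (‖biotSavartIntegrand w ξ η‖ * ‖ξ‖) := by
        gcongr; exact abs_real_inner_le_norm _ _
    _ = _ := by ring

theorem measurable_biotSavartPairing {w : E2 → ℝ} (hw : Continuous w) :
    Measurable (biotSavartPairing w) := by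
  have := hw.measurable
  have := continuous_perp.measurable
  unfold biotSavartPairing biotSavartIntegrand
  fun_prop

theorem integrable_biotSavartIntegrand {w : E2 → ℝ} (hw : Continuous w) (hwi : Integrable w)
    {M : ℝ} (hM : ∀ x, |w x| ≤ M) (ξ : E2) : Integrable (biotSavartIntegrand w ξ) := by
  obtain ⟨C, hC⟩ :=
    exists_forall_integral_abs_mul_inv_norm_sub_le finrank_euclideanSpace_fin.ge hwi hM
  refine (hC ξ).1.mono' ?_ (.of_forall fun η => (norm_biotSavartIntegrand w ξ η).le)
  have := hw.measurable
  have := continuous_perp.measurable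
  unfold biotSavartIntegrand
  fun_prop

theorem integrable_biotSavartPairing {w : E2 → ℝ} (hw : Continuous w) (hwi : Integrable w)
    (hwm : Integrable fun ξ => ‖ξ‖ * |w ξ|) {M : ℝ} (hM : ∀ x, |w x| ≤ M) :
    Integrable (biotSavartPairing w) (volume.prod volume) := by
  obtain ⟨C, hC⟩ :=
    exists_forall_integral_abs_mul_inv_norm_sub_le finrank_euclideanSpace_fin.ge hwi hM
  have hmeas := measurable_biotSavartPairing hw
  have hsec (ξ : E2) : Integrable fun η => biotSavartPairing w (ξ, η) :=
    ((hC ξ).1.const_mul _).mono' (hmeas.comp measurable_prodMk_left).aestronglyMeasurable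
      (.of_forall fun η => abs_biotSavartPairing_le w ξ η)
  refine integrable_prod_of_integral_norm_le hmeas.aestronglyMeasurable (.of_forall hsec)
    (hwm.mul_const C) (.of_forall fun ξ => ?_)
  calc ∫ η, ‖biotSavartPairing w (ξ, η)‖
      ≤ ∫ η, ‖ξ‖ * |w ξ| * (|w η| * ‖ξ - η‖⁻¹) :=
        integral_mono (hsec ξ).norm ((hC ξ).1.const_mul _) fun η => abs_biotSavartPairing_le w ξ η
    _ ≤ ‖ξ‖ * |w ξ| * C := by
        rw [integral_const_mul]; exact mul_le_mul_of_nonneg_left (hC ξ).2 (by positivity)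

theorem mul_inner_integral_biotSavartIntegrand {w : E2 → ℝ} (hw : Continuous w)
    (hwi : Integrable w) {M : ℝ} (hM : ∀ x, |w x| ≤ M) (ξ : E2) :
    w ξ * ⟪∫ η, biotSavartIntegrand w ξ η, ξ⟫ = ∫ η, biotSavartPairing w (ξ, η) := by
  rw [real_inner_comm, ← integral_inner (integrable_biotSavartIntegrand hw hwi hM ξ),
    ← integral_const_mul]
  simp only [biotSavartPairing, real_inner_comm ξ]

theorem integrable_mul_inner_integral_biotSavartIntegrand {w : E2 → ℝ} (hw : Continuous w)
    (hwi : Integrable w) (hwm : Integrable fun ξ => ‖ξ‖ * |w ξ|) {M : ℝ}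
    (hM : ∀ x, |w x| ≤ M) :
    Integrable fun ξ => w ξ * ⟪∫ η, biotSavartIntegrand w ξ η, ξ⟫ := by
  simp_rw [mul_inner_integral_biotSavartIntegrand hw hwi hM]
  exact (integrable_biotSavartPairing hw hwi hwm hM).integral_prod_left

theorem integral_mul_inner_integral_biotSavartIntegrand_eq_zero {w : E2 → ℝ}
    (hw : Continuous w) (hwi : Integrable w) (hwm : Integrable fun ξ => ‖ξ‖ * |w ξ|) {M : ℝ}
    (hM : ∀ x, |w x| ≤ M) :
    ∫ ξ, w ξ * ⟪∫ η, biotSavartIntegrand w ξ η, ξ⟫ = 0 := by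
  simp_rw [mul_inner_integral_biotSavartIntegrand hw hwi hM]
  rw [← integral_prod _ (integrable_biotSavartPairing hw hwi hwm hM)]
  exact integral_eq_zero_of_comp_swap_eq_neg (biotSavartPairing_swap w)

theorem stmt15_general (w : SchwartzMap E2 ℝ) (v : E2 → E2)
    (hv : ∀ ξ, v ξ = (2 * π)⁻¹ • ∫ η, (w η / ‖ξ - η‖ ^ 2) • perp (ξ - η)) :
    ∫ ξ, (Gg ξ)⁻¹ * w ξ *
      (⟪vG ξ, gradient (⇑w) ξ⟫ + ⟪v ξ, gradient Gg ξ⟫) = 0 := by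
  have hM (x : E2) : |w x| ≤ ‖w.toBoundedContinuousFunction‖ :=
    w.toBoundedContinuousFunction.norm_coe_le_norm x
  have hwm : Integrable fun ξ : E2 => ‖ξ‖ * |w ξ| := by
    simpa using w.integrable_pow_mul volume 1
  set T := fun ξ => oseenWeight ‖ξ‖ * fderiv ℝ (⇑w * ⇑w) ξ (perp ξ)
  set B := fun ξ => w ξ * ⟪∫ η, biotSavartIntegrand w ξ η, ξ⟫
  have hB : Integrable B :=
    integrable_mul_inner_integral_biotSavartIntegrand w.continuous w.integrable hwm hM
  have hsplit : (fun ξ => (Gg ξ)⁻¹ * w ξ * (⟪vG ξ, gradient (⇑w) ξ⟫ + ⟪v ξ, gradient Gg ξ⟫)) =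
      fun ξ => T ξ + -(4 * π)⁻¹ * B ξ := by
    ext ξ
    rw [mul_add, Gg_inv_mul_inner_vG_gradient w.differentiable, (hasGradientAt_Gg ξ).gradient,
      hv, real_inner_smul_left, real_inner_smul_right]
    simp only [T, B, biotSavartIntegrand]
    field_simp [(Gg_pos ξ).ne']
    ring
  rw [hsplit]
  by_cases h : Integrable fun ξ => T ξ + -(4 * π)⁻¹ * B ξ
  · have hT : Integrable T :=
      (h.sub (hB.const_mul _)).congr (.of_forall fun ξ => add_sub_cancel_right _ _)
    have hT_zero : ∫ ξ, T ξ = 0 :=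
      integral_radial_mul_fderiv_perp_eq_zero ((w.smooth 1).mul (w.smooth 1)) hT
    have hB_zero : ∫ ξ, B ξ = 0 :=
      integral_mul_inner_integral_biotSavartIntegrand_eq_zero w.continuous w.integrable hwm hM
    rw [integral_add hT (hB.const_mul _), integral_const_mul, hT_zero, hB_zero]
    ring
  · exact integral_undef h

/-- skew-symmetry of `Λ` on `L²_w(ℝ²)`: for sufficiently regular
(here: Schwartz) `w̃` with `G^{−1/2} w̃ ∈ L²` and `ṽ = K_{BS} ⋆ w̃`, with
`Λw̃ = v^G·∇w̃ + ṽ·∇G`, one has `∫ G^{−1} w̃ (Λw̃) = 0`. -/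
theorem stmt15 (w : SchwartzMap E2 ℝ) (v : E2 → E2)
    (hw : MemLp (fun ξ => Gg ξ ^ (-(1 : ℝ) / 2) * w ξ) 2 volume)
    (hv : ∀ ξ, v ξ = (2 * π)⁻¹ • ∫ η, (w η / ‖ξ - η‖ ^ 2) • perp (ξ - η)) :
    ∫ ξ, (Gg ξ)⁻¹ * w ξ *
      (⟪vG ξ, gradient (⇑w) ξ⟫ + ⟪v ξ, gradient Gg ξ⟫) = 0 :=
  stmt15_general w v hv

end
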